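/- Let n ∈ ℕ, r > 0, let Π*, Π, R′ : ℝ^n → ℝ^n be globally Lipschitz continuous maps, H̃ ∈ ℝ^{n×n}, and z₀, w₀ ∈ ℝ^n with z₀ = Π*(w₀) and w₀ = Π(z₀). For δ > 0, call (z_δ, w_δ) a δ-approximate solution if z_δ, w_δ : [0,∞) → ℝ^n are differentiable, z_δ(0) = z₀, w_δ(0) = w₀, and for all t ≥ 0: z_δ′(t) = (r/max(δ,t))(Π*(w_δ(t)) − z_δ(t)) and w_δ′(t) = (t/r)(−R′(z_δ(t)) − H̃(z_δ(t) + (t/r)z_δ′(t)) + Π(z_δ(t) + (t/r)z_δ′(t)) − w_δ(t)). Then there exist t_m > 0 and M > 0 (independent of δ) such that for every δ ∈ (0, t_m] and every δ-approximate solution, ‖z_δ′(t)‖ ≤ M and ‖w_δ′(t)‖ ≤ M for all t ∈ [0, t_m]; consequently the family of restrictions {(z_δ, w_δ)|_{[0,t_m]} : 0 < δ ≤ t_m} is equi-continuous and uniformly bounded. -/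

import Mathlib

/-!
Let `B` bound `‖w_δ'‖` on `[0, τ]`. Then `w_δ` stays within `B t` of `w₀`, so (as `z₀ = Π*(w₀)`)
the target `Π*(w_δ)` of the relaxation `z_δ' = (r / max(δ, t)) (Π*(w_δ) - z_δ)` stays within
`K₁ B t` of `z₀`, and a fencing argument keeps `z_δ` there as well, whatever `δ` is. Hence
`‖(t / r) z_δ'‖ ≤ 2 K₁ B t`, and the `w`-equation gives `‖w_δ'(t)‖ ≤ (t / r) (C₀ + D B t)`.
Once `D t_m² ≤ r / 2` this is at most `(t_m / r) C₀ + B / 2` on `[0, t_m]`; taking for `B` the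
maximum of the continuous function `‖w_δ'‖` on `[0, t_m]` gives `B ≤ 2 (t_m / r) C₀`, and the
other bounds follow.
-/

open Set

/-- A `δ`-approximate solution of the singular accelerated primal-dual ODE:
`z′(t) = (r / max(δ,t))(Π*(w(t)) − z(t))` and
`w′(t) = (t/r)(−R′(z(t)) − H̃(z(t) + (t/r)z′(t)) + Π(z(t) + (t/r)z′(t)) − w(t))`
for all `t ≥ 0`, with initial data `(z₀, w₀)`; `zd` and `wd` record the derivatives. -/
def IsDeltaApproxSolution (n : ℕ) (r δ : ℝ)
    (Pistar Pimap Rg : EuclideanSpace ℝ (Fin n) → EuclideanSpace ℝ (Fin n))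
    (Ht : Matrix (Fin n) (Fin n) ℝ)
    (z₀ w₀ : EuclideanSpace ℝ (Fin n))
    (z w zd wd : ℝ → EuclideanSpace ℝ (Fin n)) : Prop :=
  z 0 = z₀ ∧ w 0 = w₀ ∧
  ∀ t ≥ (0 : ℝ), HasDerivAt z (zd t) t ∧ HasDerivAt w (wd t) t ∧
    zd t = (r / max δ t) • (Pistar (w t) - z t) ∧
    wd t = (t / r) • (-(Rg (z t)) - Matrix.toEuclideanLin Ht (z t + (t / r) • zd t)
      + Pimap (z t + (t / r) • zd t) - w t)

theorem norm_sub_le_mul_of_hasDerivAt_smul_sub {E : Type*} [NormedAddCommGroup E]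
    [InnerProductSpace ℝ E] {z p : ℝ → E} {c : ℝ → ℝ} {x₀ : E} {τ L : ℝ}
    (hz : ∀ t ∈ Icc 0 τ, HasDerivAt z (c t • (p t - z t)) t)
    (hc : ∀ t ∈ Icc 0 τ, 0 ≤ c t) (hz₀ : z 0 = x₀)
    (hp : ∀ t ∈ Icc 0 τ, ‖p t - x₀‖ ≤ L * t) :
    ∀ t ∈ Icc 0 τ, ‖z t - x₀‖ ≤ L * t := by
  intro t ht
  have hderiv : ∀ s ∈ Icc 0 τ, HasDerivAt (fun s => ‖z s - x₀‖ ^ 2)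
      (2 * inner ℝ (z s - x₀) (c s • (p s - z s))) s :=
    fun s hs => ((hz s hs).sub_const x₀).norm_sq
  -- Fence `‖z - x₀‖²` by the strictly increasing `(L s)² + ε (1 + s)`: on contact, `z` is at
  -- least as far from `x₀` as the target `p`, so `‖z - x₀‖²` is not increasing there.
  have hfence : ∀ ε > 0, ‖z t - x₀‖ ^ 2 ≤ (L * t) ^ 2 + ε * (1 + t) := by
    intro ε hε
    refine image_le_of_deriv_right_lt_deriv_boundary (B := fun s => (L * s) ^ 2 + ε * (1 + s))
      (B' := fun s => 2 * L ^ 2 * s + ε)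
      (fun s hs => (hderiv s hs).continuousAt.continuousWithinAt)
      (fun s hs => (hderiv s (Ico_subset_Icc_self hs)).hasDerivWithinAt) (by simp [hz₀, hε.le])
      (fun s => ?_) (fun s hs hcontact => ?_) ht
    · refine ((((hasDerivAt_id' s).const_mul L).fun_pow 2).fun_add
        (((hasDerivAt_id' s).const_add 1).const_mul ε)).congr_deriv ?_
      push_cast
      ring
    · have hs : s ∈ Icc 0 τ := Ico_subset_Icc_self hs
      have hLs : L * s ≤ ‖z s - x₀‖ := by
        by_contra! hlt
        nlinarith [norm_nonneg (z s - x₀), mul_pos hε (by linarith [hs.1] : (0 : ℝ) < 1 + s)]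
      have hinner : inner ℝ (z s - x₀) (p s - x₀) ≤ ‖z s - x₀‖ * (L * s) :=
        (real_inner_le_norm _ _).trans (by gcongr; exact hp s hs)
      have hself : c s * (inner ℝ (z s - x₀) (p s - x₀) - ‖z s - x₀‖ ^ 2) ≤ 0 :=
        mul_nonpos_of_nonneg_of_nonpos (hc s hs) (by nlinarith [norm_nonneg (z s - x₀)])
      have hsplit : p s - z s = (p s - x₀) - (z s - x₀) := by abel
      rw [hsplit, inner_smul_right, inner_sub_right, real_inner_self_eq_norm_sq]
      nlinarith [hs.1, sq_nonneg L]
  have hsq : ‖z t - x₀‖ ^ 2 ≤ (L * t) ^ 2 := le_of_forall_pos_le_add fun ε hε => by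
    simpa [div_mul_cancel₀ ε (by linarith [ht.1] : (1 + t) ≠ 0)] using
      hfence (ε / (1 + t)) (by have := ht.1; positivity)
  exact (pow_le_pow_iff_left₀ (norm_nonneg _) ((norm_nonneg _).trans (hp t ht))
    two_ne_zero).1 hsq

theorem IsCompact.le_div_one_sub_of_forall_le_imp {α : Type*} [TopologicalSpace α] {K : Set α}
    (hK : IsCompact K) {g : α → ℝ} (hg : ContinuousOn g K) {a q : ℝ} (hq : q < 1)
    (h : ∀ B, (∀ s ∈ K, g s ≤ B) → ∀ s ∈ K, g s ≤ a + q * B) :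
    ∀ s ∈ K, g s ≤ a / (1 - q) := by
  intro s hs
  obtain ⟨x, hx, hmax⟩ := hK.exists_isMaxOn ⟨s, hs⟩ hg
  have hgx : g x ≤ a + q * g x := h (g x) (fun y hy => hmax hy) x hx
  have hgs : g s ≤ g x := hmax hs
  rw [le_div_iff₀ (by linarith)]
  nlinarith

-- `C₀` and `D` in the bound `‖w_δ'(t)‖ ≤ (t / r) (C₀ + D B t)`, valid while `‖w_δ'‖ ≤ B`.
noncomputable def initialForceNorm {n : ℕ}
    (Pimap Rg : EuclideanSpace ℝ (Fin n) → EuclideanSpace ℝ (Fin n))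
    (Ht : Matrix (Fin n) (Fin n) ℝ) (z₀ w₀ : EuclideanSpace ℝ (Fin n)) : ℝ :=
  ‖-(Rg z₀) - Matrix.toEuclideanLin Ht z₀ + Pimap z₀ - w₀‖

noncomputable def forceGrowth {n : ℕ} (K₁ K₂ K₃ : NNReal) (Ht : Matrix (Fin n) (Fin n) ℝ) : ℝ :=
  K₃ * K₁ + 3 * (K₂ + ‖Matrix.toEuclideanCLM (𝕜 := ℝ) Ht‖) * K₁ + 1

namespace IsDeltaApproxSolution

variable {n : ℕ} {r δ : ℝ} {Pistar Pimap Rg : EuclideanSpace ℝ (Fin n) → EuclideanSpace ℝ (Fin n)}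
  {Ht : Matrix (Fin n) (Fin n) ℝ} {z₀ w₀ : EuclideanSpace ℝ (Fin n)}
  {z w zd wd : ℝ → EuclideanSpace ℝ (Fin n)} {K₁ K₂ K₃ : NNReal} {τ B : ℝ}

theorem continuousOn_wd (hsol : IsDeltaApproxSolution n r δ Pistar Pimap Rg Ht z₀ w₀ z w zd wd)
    (hδ : 0 < δ) (hPistar : Continuous Pistar) (hPimap : Continuous Pimap)
    (hRg : Continuous Rg) : ContinuousOn wd (Ici 0) := by
  obtain ⟨-, -, hode⟩ := hsol
  have hz : ContinuousOn z (Ici 0) := fun t ht => (hode t ht).1.continuousAt.continuousWithinAt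
  have hw : ContinuousOn w (Ici 0) := fun t ht => (hode t ht).2.1.continuousAt.continuousWithinAt
  have hH : Continuous (Matrix.toEuclideanCLM (𝕜 := ℝ) Ht) :=
    (Matrix.toEuclideanCLM (𝕜 := ℝ) Ht).continuous
  have hzd : ContinuousOn zd (Ici 0) := by
    refine ContinuousOn.congr ?_ fun t ht => (hode t ht).2.2.1
    have hmax : Continuous fun t => max δ t := by fun_prop
    exact (continuousOn_const.div hmax.continuousOn fun t _ => (lt_max_of_lt_left hδ).ne').smul
      ((hPistar.comp_continuousOn hw).sub hz)
  have hu : ContinuousOn (fun t => z t + (t / r) • zd t) (Ici 0) :=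
    hz.add ((continuousOn_id.div_const r).smul hzd)
  refine ContinuousOn.congr ?_ fun t ht => (hode t ht).2.2.2
  exact (continuousOn_id.div_const r).smul ((((hRg.comp_continuousOn hz).neg.sub
    (hH.comp_continuousOn hu)).add (hPimap.comp_continuousOn hu)).sub hw)

theorem norm_w_sub_le (hsol : IsDeltaApproxSolution n r δ Pistar Pimap Rg Ht z₀ w₀ z w zd wd)
    (hB : ∀ t ∈ Icc 0 τ, ‖wd t‖ ≤ B) : ∀ t ∈ Icc 0 τ, ‖w t - w₀‖ ≤ B * t := by
  intro t ht
  have := (convex_Icc 0 τ).norm_image_sub_le_of_norm_hasDerivWithin_le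
    (fun s hs => (hsol.2.2 s hs.1).2.1.hasDerivWithinAt) hB ⟨le_rfl, ht.1.trans ht.2⟩ ht
  simpa [hsol.2.1, abs_of_nonneg ht.1] using this

theorem norm_pistar_w_sub_le
    (hsol : IsDeltaApproxSolution n r δ Pistar Pimap Rg Ht z₀ w₀ z w zd wd)
    (hPistar : LipschitzWith K₁ Pistar) (hz₀ : z₀ = Pistar w₀)
    (hB : ∀ t ∈ Icc 0 τ, ‖wd t‖ ≤ B) : ∀ t ∈ Icc 0 τ, ‖Pistar (w t) - z₀‖ ≤ K₁ * B * t := by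
  intro t ht
  calc ‖Pistar (w t) - z₀‖ ≤ K₁ * ‖w t - w₀‖ := hz₀ ▸ hPistar.norm_sub_le _ _
    _ ≤ K₁ * (B * t) := by gcongr; exact hsol.norm_w_sub_le hB t ht
    _ = K₁ * B * t := by ring

theorem norm_z_sub_le (hsol : IsDeltaApproxSolution n r δ Pistar Pimap Rg Ht z₀ w₀ z w zd wd)
    (hr : 0 ≤ r) (hPistar : LipschitzWith K₁ Pistar) (hz₀ : z₀ = Pistar w₀)
    (hB : ∀ t ∈ Icc 0 τ, ‖wd t‖ ≤ B) : ∀ t ∈ Icc 0 τ, ‖z t - z₀‖ ≤ K₁ * B * t := by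
  refine norm_sub_le_mul_of_hasDerivAt_smul_sub (c := fun t => r / max δ t) (fun t ht => ?_)
    (fun t ht => div_nonneg hr (ht.1.trans (le_max_right _ _))) hsol.1
    (hsol.norm_pistar_w_sub_le hPistar hz₀ hB)
  obtain ⟨hz, -, hzd, -⟩ := hsol.2.2 t ht.1
  rwa [← hzd]

theorem norm_zd_le (hsol : IsDeltaApproxSolution n r δ Pistar Pimap Rg Ht z₀ w₀ z w zd wd)
    (hr : 0 ≤ r) (hPistar : LipschitzWith K₁ Pistar) (hz₀ : z₀ = Pistar w₀)
    (hB : ∀ t ∈ Icc 0 τ, ‖wd t‖ ≤ B) : ∀ t ∈ Icc 0 τ, ‖zd t‖ ≤ 2 * r * (K₁ * B) := by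
  intro t ht
  have hKB : 0 ≤ K₁ * B := mul_nonneg K₁.2 ((norm_nonneg _).trans (hB 0 ⟨le_rfl, ht.1.trans ht.2⟩))
  have hmax : 0 ≤ max δ t := ht.1.trans (le_max_right _ _)
  have hgap : ‖Pistar (w t) - z t‖ ≤ 2 * (K₁ * B) * t :=
    calc ‖Pistar (w t) - z t‖ = ‖(Pistar (w t) - z₀) - (z t - z₀)‖ := by
          rw [sub_sub_sub_cancel_right]
      _ ≤ ‖Pistar (w t) - z₀‖ + ‖z t - z₀‖ := norm_sub_le _ _
      _ ≤ K₁ * B * t + K₁ * B * t := add_le_add (hsol.norm_pistar_w_sub_le hPistar hz₀ hB t ht)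
          (hsol.norm_z_sub_le hr hPistar hz₀ hB t ht)
      _ = 2 * (K₁ * B) * t := by ring
  rw [(hsol.2.2 t ht.1).2.2.1, norm_smul, Real.norm_of_nonneg (div_nonneg hr hmax)]
  calc r / max δ t * ‖Pistar (w t) - z t‖ ≤ r / max δ t * (2 * (K₁ * B) * t) := by gcongr
    _ = 2 * r * (K₁ * B) * (t / max δ t) := by ring
    _ ≤ 2 * r * (K₁ * B) * 1 := by gcongr; exact div_le_one_of_le₀ (le_max_right _ _) hmax
    _ = 2 * r * (K₁ * B) := mul_one _

theorem norm_wd_le (hsol : IsDeltaApproxSolution n r δ Pistar Pimap Rg Ht z₀ w₀ z w zd wd)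
    (hr : 0 < r) (hPistar : LipschitzWith K₁ Pistar) (hPimap : LipschitzWith K₂ Pimap)
    (hRg : LipschitzWith K₃ Rg) (hz₀ : z₀ = Pistar w₀) (hB : ∀ t ∈ Icc 0 τ, ‖wd t‖ ≤ B) :
    ∀ t ∈ Icc 0 τ, ‖wd t‖ ≤
      t / r * (initialForceNorm Pimap Rg Ht z₀ w₀ + forceGrowth K₁ K₂ K₃ Ht * B * t) := by
  intro t ht
  have ht₀ := ht.1
  set H := Matrix.toEuclideanCLM (𝕜 := ℝ) Ht
  set u := z t + (t / r) • zd t with hu_def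
  have hB₀ : 0 ≤ B := (norm_nonneg _).trans (hB 0 ⟨le_rfl, ht.1.trans ht.2⟩)
  have hz := hsol.norm_z_sub_le hr.le hPistar hz₀ hB t ht
  have hw := hsol.norm_w_sub_le hB t ht
  have hu : ‖u - z₀‖ ≤ 3 * (K₁ * B) * t :=
    calc ‖u - z₀‖ = ‖(z t - z₀) + (t / r) • zd t‖ := by rw [hu_def, add_sub_right_comm]
      _ ≤ ‖z t - z₀‖ + t / r * ‖zd t‖ := by
          grw [norm_add_le, norm_smul, Real.norm_of_nonneg (by positivity)]
      _ ≤ K₁ * B * t + t / r * (2 * r * (K₁ * B)) := by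
          gcongr
          exact hsol.norm_zd_le hr.le hPistar hz₀ hB t ht
      _ = 3 * (K₁ * B) * t := by field_simp; ring
  have hG : LipschitzWith (K₂ + ‖H‖₊) fun x => Pimap x - Matrix.toEuclideanLin Ht x :=
    hPimap.sub H.lipschitz
  have hforce : ‖(-(Rg (z t)) - Matrix.toEuclideanLin Ht u + Pimap u - w t) -
      (-(Rg z₀) - Matrix.toEuclideanLin Ht z₀ + Pimap z₀ - w₀)‖ ≤
      (K₂ + ‖H‖) * ‖u - z₀‖ + K₃ * ‖z t - z₀‖ + ‖w t - w₀‖ := by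
    rw [show ∀ a b c d e f g h : EuclideanSpace ℝ (Fin n), (-a - b + c - d) - (-e - f + g - h) =
      ((c - b) - (g - f)) - (a - e) - (d - h) from fun _ _ _ _ _ _ _ _ => by abel]
    grw [norm_sub_le, norm_sub_le, hG.norm_sub_le, hRg.norm_sub_le]
    rfl
  rw [(hsol.2.2 t ht₀).2.2.2, norm_smul, Real.norm_of_nonneg (by positivity)]
  gcongr
  grw [norm_le_insert' _ (-(Rg z₀) - Matrix.toEuclideanLin Ht z₀ + Pimap z₀ - w₀), hforce, hu, hz,
    hw]
  unfold initialForceNorm forceGrowth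
  linarith

theorem norm_wd_le_of_sq_le (hsol : IsDeltaApproxSolution n r δ Pistar Pimap Rg Ht z₀ w₀ z w zd wd)
    (hr : 0 < r) (hδ : 0 < δ) (hPistar : LipschitzWith K₁ Pistar)
    (hPimap : LipschitzWith K₂ Pimap) (hRg : LipschitzWith K₃ Rg) (hz₀ : z₀ = Pistar w₀)
    {tm : ℝ} (hsmall : forceGrowth K₁ K₂ K₃ Ht * tm ^ 2 ≤ r / 2) :
    ∀ t ∈ Icc 0 tm, ‖wd t‖ ≤ 2 * (tm / r * initialForceNorm Pimap Rg Ht z₀ w₀) := by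
  set C₀ := initialForceNorm Pimap Rg Ht z₀ w₀
  set D := forceGrowth K₁ K₂ K₃ Ht
  have hC₀ : 0 ≤ C₀ := norm_nonneg _
  have hD : 0 ≤ D := by unfold D forceGrowth; positivity
  have hwd := hsol.continuousOn_wd hδ hPistar.continuous hPimap.continuous hRg.continuous
  -- Bootstrap: a bound `B` on `[0, tm]` improves to `(tm / r) C₀ + B / 2`.
  convert isCompact_Icc.le_div_one_sub_of_forall_le_imp (hwd.norm.mono Icc_subset_Ici_self)
    (a := tm / r * C₀) (by norm_num : (1 / 2 : ℝ) < 1) fun B hB t ht => ?_ using 3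
  · ring
  obtain ⟨ht₀, htm⟩ := ht
  have hB₀ : 0 ≤ B := (norm_nonneg _).trans (hB 0 ⟨le_rfl, ht₀.trans htm⟩)
  have htm₀ := ht₀.trans htm
  calc ‖wd t‖ ≤ t / r * (C₀ + D * B * t) :=
        hsol.norm_wd_le hr hPistar hPimap hRg hz₀ hB t ⟨ht₀, htm⟩
    _ ≤ tm / r * (C₀ + D * B * tm) := by gcongr
    _ = tm / r * C₀ + D * tm ^ 2 / r * B := by ring
    _ ≤ tm / r * C₀ + (r / 2) / r * B := by gcongr
    _ = tm / r * C₀ + 1 / 2 * B := by field_simp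

end IsDeltaApproxSolution

theorem stmt_8_general (n : ℕ) (r : ℝ) (hr : 0 < r)
    (Pistar Pimap Rg : EuclideanSpace ℝ (Fin n) → EuclideanSpace ℝ (Fin n))
    (K₁ K₂ K₃ : NNReal)
    (hPistar : LipschitzWith K₁ Pistar)
    (hPimap : LipschitzWith K₂ Pimap)
    (hRg : LipschitzWith K₃ Rg)
    (Ht : Matrix (Fin n) (Fin n) ℝ)
    (z₀ w₀ : EuclideanSpace ℝ (Fin n))
    (hz₀ : z₀ = Pistar w₀) :
    ∃ tm > (0 : ℝ), ∃ M > (0 : ℝ),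
      ∀ δ : ℝ, 0 < δ → δ ≤ tm →
        ∀ z w zd wd : ℝ → EuclideanSpace ℝ (Fin n),
          IsDeltaApproxSolution n r δ Pistar Pimap Rg Ht z₀ w₀ z w zd wd →
          ∀ t ∈ Icc (0 : ℝ) tm,
            ‖zd t‖ ≤ M ∧ ‖wd t‖ ≤ M ∧ ‖z t‖ ≤ M ∧ ‖w t‖ ≤ M := by
  set D := forceGrowth K₁ K₂ K₃ Ht
  have hD : 0 < D := by unfold D forceGrowth; positivity
  set tm := min 1 (r / (2 * D))
  have htm : 0 < tm := by positivity
  have hsmall : D * tm ^ 2 ≤ r / 2 :=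
    calc D * tm ^ 2 ≤ D * (r / (2 * D)) := by
          gcongr
          nlinarith [min_le_left 1 (r / (2 * D)), min_le_right 1 (r / (2 * D))]
      _ = r / 2 := by field_simp
  set Mw := 2 * (tm / r * initialForceNorm Pimap Rg Ht z₀ w₀)
  have hMw : 0 ≤ Mw := by unfold Mw initialForceNorm; positivity
  refine ⟨tm, htm, 2 * r * (K₁ * Mw) + Mw + (‖z₀‖ + K₁ * Mw * tm) + (‖w₀‖ + Mw * tm) + 1,
    by positivity, fun δ hδ _ z w zd wd hsol t ht => ?_⟩
  have hwd : ∀ t ∈ Icc 0 tm, ‖wd t‖ ≤ Mw :=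
    hsol.norm_wd_le_of_sq_le hr hδ hPistar hPimap hRg hz₀ hsmall
  have hzd := hsol.norm_zd_le hr.le hPistar hz₀ hwd t ht
  have hz : ‖z t‖ ≤ ‖z₀‖ + K₁ * Mw * tm := by
    grw [norm_le_insert' (z t) z₀, hsol.norm_z_sub_le hr.le hPistar hz₀ hwd t ht, ht.2]
  have hw : ‖w t‖ ≤ ‖w₀‖ + Mw * tm := by
    grw [norm_le_insert' (w t) w₀, hsol.norm_w_sub_le hwd t ht, ht.2]
  have : 0 ≤ 2 * r * (K₁ * Mw) := by positivity
  have : 0 ≤ K₁ * Mw * tm := by positivity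
  have : 0 ≤ Mw * tm := by positivity
  refine ⟨?_, ?_, ?_, ?_⟩ <;> linarith [hwd t ht, norm_nonneg z₀, norm_nonneg w₀]

/-- Lemma 2 of the paper. For `r > 0`, globally Lipschitz maps
`Π*, Π, R′`, a matrix `H̃` and compatible initial data `z₀ = Π*(w₀)`, `w₀ = Π(z₀)`,
there exist `t_m > 0` and `M > 0`, independent of `δ`, such that every `δ`-approximate
solution with `0 < δ ≤ t_m` has derivatives bounded by `M` on `[0, t_m]`; consequently
the family of restrictions to `[0, t_m]` is equi-continuous and uniformly bounded. -/
theorem stmt_8 (n : ℕ) (r : ℝ) (hr : 0 < r)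
    (Pistar Pimap Rg : EuclideanSpace ℝ (Fin n) → EuclideanSpace ℝ (Fin n))
    (K₁ K₂ K₃ : NNReal)
    (hPistar : LipschitzWith K₁ Pistar)
    (hPimap : LipschitzWith K₂ Pimap)
    (hRg : LipschitzWith K₃ Rg)
    (Ht : Matrix (Fin n) (Fin n) ℝ)
    (z₀ w₀ : EuclideanSpace ℝ (Fin n))
    (hz₀ : z₀ = Pistar w₀) (hw₀ : w₀ = Pimap z₀) :
    ∃ tm > (0 : ℝ), ∃ M > (0 : ℝ),
      ∀ δ : ℝ, 0 < δ → δ ≤ tm →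
        ∀ z w zd wd : ℝ → EuclideanSpace ℝ (Fin n),
          IsDeltaApproxSolution n r δ Pistar Pimap Rg Ht z₀ w₀ z w zd wd →
          ∀ t ∈ Icc (0 : ℝ) tm,
            ‖zd t‖ ≤ M ∧ ‖wd t‖ ≤ M ∧ ‖z t‖ ≤ M ∧ ‖w t‖ ≤ M :=
  stmt_8_general n r hr Pistar Pimap Rg K₁ K₂ K₃ hPistar hPimap hRg Ht z₀ w₀ hz₀
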